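/- arXiv:2110.02435 — 2 statements merged into one kernel-verified Lean document; each statement's English description precedes it below -/
import Mathlib

section
/- Let S be a regular local ring and f a nonzero nonunit. If f admits, up to isomorphism, only finitely many indecomposable matrix factorizations with d factors, then f admits only finitely many indecomposable matrix factorizations with k factors for every 2 ≤ k ≤ d. -/
open IsLocalRing

/-- A Noetherian local ring is regular if its maximal ideal can be generated by
`dim` many elements. -/
def IsRegularLocal (S : Type*) [CommRing S] [IsLocalRing S] : Prop :=
  IsNoetherianRing S ∧ ∃ s : Finset S, Ideal.span (s : Set S) = maximalIdeal S ∧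
    (s.card : WithBot (WithTop ℕ)) = ringKrullDim S

/-- A `d`-fold matrix factorization of `f`. -/
def IsMatrixFactorization {S : Type*} [CommRing S] (f : S) {d n : ℕ}
    (φ : Fin d → Matrix (Fin n) (Fin n) S) : Prop :=
  (List.ofFn φ).prod = f • (1 : Matrix (Fin n) (Fin n) S)

/-- Isomorphism of `d`-fold matrix factorizations (possibly of different sizes). -/
def MFIso {S : Type*} [CommRing S] {d n m : ℕ} [NeZero d]
    (φ : Fin d → Matrix (Fin n) (Fin n) S) (ψ : Fin d → Matrix (Fin m) (Fin m) S) : Prop :=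
  ∃ (α : Fin d → Matrix (Fin m) (Fin n) S) (β : Fin d → Matrix (Fin n) (Fin m) S),
    (∀ i, α i * β i = 1) ∧ (∀ i, β i * α i = 1) ∧
    (∀ i, α i * φ i = ψ i * α (i + 1))

/-- Indecomposability: the only idempotent endomorphisms are `0` and `1`. -/
def MFIndecomposable {S : Type*} [CommRing S] (f : S) {d n : ℕ} [NeZero d]
    (φ : Fin d → Matrix (Fin n) (Fin n) S) : Prop :=
  IsMatrixFactorization f φ ∧
    ∀ e : Fin d → Matrix (Fin n) (Fin n) S, (∀ i, e i * φ i = φ i * e (i + 1)) →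
      (∀ i, e i * e i = e i) → e = 0 ∨ e = 1

/-- `f` has finite `d`-MF type: up to isomorphism there are only finitely many
indecomposable `d`-fold matrix factorizations of `f`. -/
def FiniteMFType {S : Type*} [CommRing S] (f : S) (d : ℕ) [NeZero d] : Prop :=
  ∃ (N : ℕ) (sz : Fin N → ℕ)
    (Y : ∀ i : Fin N, Fin d → Matrix (Fin (sz i)) (Fin (sz i)) S),
    ∀ (n : ℕ) (φ : Fin d → Matrix (Fin n) (Fin n) S),
      MFIndecomposable f φ → ∃ i : Fin N, MFIso φ (Y i)

lemma aux_val_add_one {k : ℕ} [NeZero k] (j : Fin k) (x : Fin (k+1)) (hx : (x : ℕ) = (j : ℕ)) :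
    ((x + 1 : Fin (k+1)) : ℕ) = (j : ℕ) + 1 := by
  have hk : 0 < k := Nat.pos_of_ne_zero (NeZero.ne k)
  rw [Fin.add_def]
  have h1 : ((1 : Fin (k+1)) : ℕ) = 1 := by
    rw [Fin.val_one']
    exact Nat.mod_eq_of_lt (by omega)
  rw [h1, hx]
  exact Nat.mod_eq_of_lt (by omega)

lemma aux_castSucc_add_one_lt {k : ℕ} [NeZero k] (j : Fin k) (h : (j : ℕ) + 1 < k) :
    j.castSucc + 1 = (j + 1).castSucc := by
  apply Fin.ext
  rw [aux_val_add_one j j.castSucc (by simp), Fin.coe_castSucc, Fin.add_def]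
  have h1 : ((1 : Fin k) : ℕ) = 1 := by
    rw [Fin.val_one']; exact Nat.mod_eq_of_lt (by omega)
  rw [h1]
  exact (Nat.mod_eq_of_lt h).symm

lemma aux_castSucc_add_one_eq {k : ℕ} [NeZero k] (j : Fin k) (h : (j : ℕ) + 1 = k) :
    j.castSucc + 1 = Fin.last k := by
  apply Fin.ext
  rw [aux_val_add_one j j.castSucc (by simp), Fin.val_last, h]

lemma aux_add_one_eq_zero {k : ℕ} [NeZero k] (j : Fin k) (h : (j : ℕ) + 1 = k) :
    j + 1 = 0 := by
  apply Fin.ext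
  rw [Fin.add_def]
  have h1 : ((1 : Fin k) : ℕ) = 1 % k := Fin.val_one' k
  rw [h1, Fin.val_zero]
  have := Nat.pos_of_ne_zero (NeZero.ne k)
  rcases Nat.lt_or_ge 1 k with h2 | h2
  · rw [Nat.mod_eq_of_lt h2, h]
    exact Nat.mod_self k
  · interval_cases k
    simp

lemma step_down {S : Type*} [CommRing S] (f : S) (k : ℕ) [NeZero k]
    (h : FiniteMFType f (k + 1)) : FiniteMFType f k := by
  obtain ⟨N, sz, Y, hY⟩ := h
  refine ⟨N, sz, fun i j => if (j : ℕ) + 1 < k then Y i j.castSucc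
      else Y i j.castSucc * Y i (Fin.last k), ?_⟩
  intro n φ hφ
  set φ' : Fin (k + 1) → Matrix (Fin n) (Fin n) S :=
    fun i => if h : (i : ℕ) < k then φ ⟨i, h⟩ else 1 with hφ'def
  have hcast : ∀ j : Fin k, φ' j.castSucc = φ j := by
    intro j; simp [hφ'def, j.isLt]
  have hlast : φ' (Fin.last k) = 1 := by simp [hφ'def]
  have hlastadd : Fin.last k + 1 = (0 : Fin (k + 1)) := by
    apply Fin.ext; simp [Fin.add_def]
  have hindec' : MFIndecomposable f φ' := by
    constructor
    · have hmf := hφ.1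
      unfold IsMatrixFactorization at hmf ⊢
      rw [List.ofFn_succ']
      simp only [List.concat_eq_append, List.prod_append, List.prod_cons, List.prod_nil,
        hlast, mul_one]
      rw [show (List.ofFn fun j : Fin k => φ' j.castSucc) = List.ofFn φ from
        congrArg List.ofFn (funext hcast)]
      simpa using hmf
    · intro e' he'comm he'idem
      have hlaste : e' (Fin.last k) = e' 0 := by
        have := he'comm (Fin.last k)
        rw [hlast, hlastadd, one_mul, mul_one] at this
        exact this
      set e : Fin k → Matrix (Fin n) (Fin n) S := fun j => e' j.castSucc with hedef
      have hecomm : ∀ j, e j * φ j = φ j * e (j + 1) := by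
        intro j
        have hj := he'comm j.castSucc
        rw [hcast] at hj
        rcases lt_or_eq_of_le (Nat.succ_le_of_lt j.isLt) with hlt | heq
        · rw [aux_castSucc_add_one_lt j hlt] at hj
          exact hj
        · rw [aux_castSucc_add_one_eq j heq, hlaste] at hj
          show e' j.castSucc * φ j = φ j * e' ((j + 1 : Fin k)).castSucc
          rw [aux_add_one_eq_zero j heq, show ((0 : Fin k)).castSucc = (0 : Fin (k+1)) from Fin.ext (by simp)]
          exact hj
      have heidem : ∀ j, e j * e j = e j := fun j => he'idem j.castSucc
      rcases hφ.2 e hecomm heidem with h0 | h1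
      · left; funext i
        refine Fin.lastCases ?_ ?_ i
        · rw [hlaste]
          have h00 : e 0 = 0 := congrFun h0 0
          rw [hedef] at h00
          simpa [Fin.castSucc_zero] using h00
        · intro j
          exact congrFun h0 j
      · right; funext i
        refine Fin.lastCases ?_ ?_ i
        · rw [hlaste]
          have h00 : e 0 = 1 := congrFun h1 0
          rw [hedef] at h00
          simpa [Fin.castSucc_zero] using h00
        · intro j
          exact congrFun h1 j
  obtain ⟨i, α, β, hαβ, hβα, hcomm⟩ := hY n φ' hindec'
  refine ⟨i, fun j => α j.castSucc, fun j => β j.castSucc, fun j => hαβ _, fun j => hβα _, ?_⟩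
  intro j
  have hj := hcomm j.castSucc
  rw [hcast] at hj
  have hαlast : α (Fin.last k) = Y i (Fin.last k) * α 0 := by
    have := hcomm (Fin.last k)
    rw [hlast, hlastadd, Matrix.mul_one] at this
    exact this
  rcases lt_or_eq_of_le (Nat.succ_le_of_lt j.isLt) with hlt | heq
  · rw [aux_castSucc_add_one_lt j hlt] at hj
    show α j.castSucc * φ j =
      (if (j : ℕ) + 1 < k then Y i j.castSucc else Y i j.castSucc * Y i (Fin.last k)) *
        α (j + 1 : Fin k).castSucc
    rw [if_pos hlt]
    exact hj
  · rw [aux_castSucc_add_one_eq j heq, hαlast] at hj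
    show α j.castSucc * φ j =
      (if (j : ℕ) + 1 < k then Y i j.castSucc else Y i j.castSucc * Y i (Fin.last k)) *
        α (j + 1 : Fin k).castSucc
    rw [if_neg (by omega), aux_add_one_eq_zero j heq, show ((0 : Fin k)).castSucc = (0 : Fin (k+1)) from Fin.ext (by simp), Matrix.mul_assoc]
    exact hj

/-- if `f` has finite `d`-MF type over a regular local ring, then it has
finite `k`-MF type for all `2 ≤ k ≤ d`. -/
theorem finiteMFType_descends {S : Type*} [CommRing S] [IsLocalRing S]
    (hreg : IsRegularLocal S) (f : S) (hf0 : f ≠ 0) (hfu : ¬ IsUnit f)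
    (d : ℕ) [NeZero d] (hfin : FiniteMFType f d) :
    ∀ k : ℕ, 2 ≤ k → k ≤ d → ∀ (_ : NeZero k), FiniteMFType f k := by
  intro k _ hkd hk
  have key : ∀ j : ℕ, ∀ (m : ℕ) [NeZero m], m + j = d → FiniteMFType f m := by
    intro j
    induction j with
    | zero =>
      intro m hm hmd
      haveI := hm
      have hmd' : m = d := by omega
      subst hmd'
      exact hfin
    | succ j ih =>
      intro m hm hmd
      haveI := hm
      exact step_down f m (ih (m + 1) (by omega))
  haveI := hk
  exact key (d - k) k (by omega)
end

section
/- Let S = k⟦x,y⟧ with char k ≠ 2. For distinct positive integers k ≠ j, the S/(x²y)-modules coker[[x, y^k],[0, −x]] and coker[[x, y^j],[0, −x]] are not isomorphic. Consequently the matrix factorizations (A_k, diag(y,y), A_k) of x²y with 3 factors are pairwise non-isomorphic, and x²y has infinitely many isomorphism classes of indecomposable reduced 3-fold matrix factorizations. -/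
open MvPowerSeries

/-- A matrix factorization is reduced if every entry of every matrix is a nonunit
(i.e. lies in the maximal ideal, in the local case). -/
def MFReduced {S : Type*} [CommRing S] {d n : ℕ}
    (φ : Fin d → Matrix (Fin n) (Fin n) S) : Prop :=
  ∀ i r c, ¬ IsUnit (φ i r c)

/-- `f` has finite reduced `d`-MF type: up to isomorphism only finitely many
indecomposable reduced `d`-fold matrix factorizations. -/
def FiniteReducedMFType {S : Type*} [CommRing S] (f : S) (d : ℕ) [NeZero d] : Prop :=
  ∃ (N : ℕ) (sz : Fin N → ℕ)
    (Y : ∀ i : Fin N, Fin d → Matrix (Fin (sz i)) (Fin (sz i)) S),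
    ∀ (n : ℕ) (φ : Fin d → Matrix (Fin n) (Fin n) S),
      MFIndecomposable f φ → MFReduced φ → ∃ i : Fin N, MFIso φ (Y i)

/-!
Write `M_j` for the cokernel of `A_j` over `R = k⟦x,y⟧/(x²y)`. If `j < l`, then on `M_l` every
`x • u` is a multiple of `y ^ (j + 1)`, because `x • (u₀, u₁) ≡ y ^ l • (u₁, 0)` modulo the image
of `A_l`. On `M_j` this fails: pairing with the row `(x, y ^ j)` maps the image of `A_j` into
`(x²)`, so it would give `x y ^ j ∈ (x², y ^ (j + 1))`, which the coefficient of `x y ^ j` rules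
out. An isomorphism of matrix factorizations induces one of cokernels, so the factorizations
`(A_j, y • 1, A_j)` are pairwise non-isomorphic.

They are also indecomposable. For an idempotent endomorphism `(e₀, e₁, e₂)`, `e₀ A_j = A_j e₁`
forces the constant term of `e₀` to be upper triangular with equal diagonal entries, hence `0`
or `1`. Since `constantCoeff : k⟦x,y⟧ → k` is local, an idempotent matrix whose constant term is
`0` (resp. `1`) is itself `0` (resp. `1`); then `e₁, e₂` follow by cancelling `A_j` and `y`. With infinitely many pairwise non-isomorphic reduced
indecomposables, finite type fails by pigeonhole.
-/

open scoped nonZeroDivisors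

namespace Matrix

variable {R S : Type*} [CommRing R] [CommRing S] {m n : Type*}

abbrev coker [Fintype n] [DecidableEq n] (A : Matrix n n R) : Type _ :=
  (n → R) ⧸ LinearMap.range A.toLin'

theorem nonempty_cokerEquiv_of_mul_eq_mul [Fintype m] [Fintype n] [DecidableEq m]
    [DecidableEq n] {A : Matrix n n R} {B : Matrix m m R} {P Q : Matrix m n R}
    {P' Q' : Matrix n m R} (hPP' : P * P' = 1) (hP'P : P' * P = 1) (hQQ' : Q * Q' = 1)
    (h : P * A = B * Q) : Nonempty (A.coker ≃ₗ[R] B.coker) := by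
  let e : (n → R) ≃ₗ[R] (m → R) := LinearEquiv.ofLinearMap P.toLin' P'.toLin'
    (by rw [← toLin'_mul, hPP', toLin'_one]) (by rw [← toLin'_mul, hP'P, toLin'_one])
  have hQ : LinearMap.range Q.toLin' = ⊤ := LinearMap.range_eq_top_of_surjective _ fun v =>
    ⟨Q'.toLin' v, by rw [← toLin'_mul_apply, hQQ', toLin'_one, LinearMap.id_apply]⟩
  refine ⟨Submodule.Quotient.equiv _ _ e ?_⟩
  change (LinearMap.range A.toLin').map P.toLin' = _
  rw [← LinearMap.range_comp, ← toLin'_mul, h, toLin'_mul, LinearMap.range_comp, hQ,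
    Submodule.map_top]

theorem eq_of_smul_eq_smul_of_mem_nonZeroDivisors {r : R} (hr : r ∈ R⁰) {M N : Matrix m n R}
    (h : r • M = r • N) : M = N := by
  ext i j
  exact (mul_cancel_left_mem_nonZeroDivisors hr).1 (congrFun (congrFun h i) j)

theorem upperTriangular_mul_self (a b : R) :
    !![a, b; 0, -a] * !![a, b; 0, -a] = a ^ 2 • (1 : Matrix (Fin 2) (Fin 2) R) := by
  ext i j
  fin_cases i <;> fin_cases j <;> simp [mul_apply] <;> ring

theorem diagonal_fin_two_eq_smul_one (a : R) :
    !![a, 0; 0, a] = a • (1 : Matrix (Fin 2) (Fin 2) R) := by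
  ext i j
  fin_cases i <;> fin_cases j <;> simp

theorem eq_zero_of_isIdempotentElem_of_map_eq_zero [Fintype n] [DecidableEq n] (f : R →+* S)
    [IsLocalHom f] {e : Matrix n n R} (he : IsIdempotentElem e) (h : e.map f = 0) : e = 0 := by
  have hunit : IsUnit (1 - e) := by
    rw [isUnit_iff_isUnit_det]
    refine IsUnit.of_map f _ ?_
    rw [RingHom.map_det, map_sub, map_one, RingHom.mapMatrix_apply, h, sub_zero, det_one]
    exact isUnit_one
  refine hunit.mul_left_eq_zero.1 ?_
  rw [mul_sub, mul_one, he.eq, sub_self]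

theorem eq_one_of_isIdempotentElem_of_map_eq_one [Fintype n] [DecidableEq n] (f : R →+* S)
    [IsLocalHom f] {e : Matrix n n R} (he : IsIdempotentElem e) (h : e.map f = 1) : e = 1 := by
  refine (sub_eq_zero.1 (eq_zero_of_isIdempotentElem_of_map_eq_zero f he.one_sub ?_)).symm
  rw [← RingHom.mapMatrix_apply, map_sub, map_one, RingHom.mapMatrix_apply, h, sub_self]

theorem eq_zero_or_eq_one_of_isIdempotentElem_upperTriangular {k : Type*} [Field k] {a b : k}
    (h : IsIdempotentElem !![a, b; 0, a]) : !![a, b; 0, a] = 0 ∨ !![a, b; 0, a] = 1 := by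
  have h00 : a * a = a := by simpa using congrFun (congrFun h 0) 0
  have h01 : a * b + b * a = b := by simpa using congrFun (congrFun h 0) 1
  rcases IsIdempotentElem.iff_eq_zero_or_one.1 h00 with rfl | rfl
  · have hb : b = 0 := by simpa using h01.symm
    left
    simp [hb, ← ext_iff, Fin.forall_fin_two]
  · have hb : b = 0 := by linear_combination h01
    right
    simp [hb, ← ext_iff, Fin.forall_fin_two]

end Matrix

theorem MFIso.nonempty_cokerEquiv {S R : Type*} [CommRing S] [CommRing R] (q : S →+* R)
    {d n m : ℕ} [NeZero d] {φ : Fin d → Matrix (Fin n) (Fin n) S}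
    {ψ : Fin d → Matrix (Fin m) (Fin m) S} (h : MFIso φ ψ) :
    Nonempty (((φ 0).map q).coker ≃ₗ[R] ((ψ 0).map q).coker) := by
  obtain ⟨α, β, hαβ, hβα, hcomm⟩ := h
  have map_mul_eq_one {a b : ℕ} {M : Matrix (Fin a) (Fin b) S} {N : Matrix (Fin b) (Fin a) S}
      (hMN : M * N = 1) : M.map q * N.map q = 1 := by
    rw [← Matrix.map_mul, hMN, Matrix.map_one _ (map_zero q) (map_one q)]
  exact Matrix.nonempty_cokerEquiv_of_mul_eq_mul (map_mul_eq_one (hαβ 0))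
    (map_mul_eq_one (hβα 0)) (map_mul_eq_one (hαβ 1))
    (by rw [← Matrix.map_mul, ← Matrix.map_mul, hcomm 0, zero_add])

section SMulDvd

variable {R : Type*} [CommRing R]

def SMulDvd (a b : R) (M : Type*) [AddCommGroup M] [Module R M] : Prop :=
  ∀ u : M, ∃ v : M, a • u = b • v

variable {a b c : R} {M N : Type*} [AddCommGroup M] [Module R M] [AddCommGroup N] [Module R N]

theorem SMulDvd.of_linearEquiv (e : M ≃ₗ[R] N) (h : SMulDvd a b M) : SMulDvd a b N := by
  intro u
  obtain ⟨v, hv⟩ := h (e.symm u)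
  exact ⟨e v, by rw [← e.apply_symm_apply u, ← map_smul, hv, map_smul]⟩

theorem SMulDvd.of_dvd (hcb : c ∣ b) (h : SMulDvd a b M) : SMulDvd a c M := by
  obtain ⟨d, rfl⟩ := hcb
  intro u
  obtain ⟨v, hv⟩ := h u
  exact ⟨d • v, by rw [hv, mul_smul]⟩

theorem smulDvd_coker_upperTriangular (a b : R) : SMulDvd a b !![a, b; 0, -a].coker := by
  intro u
  obtain ⟨w, rfl⟩ := Submodule.Quotient.mk_surjective _ u
  refine ⟨Submodule.Quotient.mk ![w 1, 0], ?_⟩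
  rw [← Submodule.Quotient.mk_smul, ← Submodule.Quotient.mk_smul, Submodule.Quotient.eq]
  refine ⟨![w 0, -w 1], ?_⟩
  ext i
  fin_cases i <;> simp [Matrix.mulVec, dotProduct, sub_eq_add_neg]

theorem mul_mem_span_of_smulDvd_coker (h : SMulDvd a c !![a, b; 0, -a].coker) :
    a * b ∈ Ideal.span {a ^ 2, c} := by
  obtain ⟨v, hv⟩ := h (Submodule.Quotient.mk ![0, 1])
  obtain ⟨v, rfl⟩ := Submodule.Quotient.mk_surjective _ v
  rw [← Submodule.Quotient.mk_smul, ← Submodule.Quotient.mk_smul, Submodule.Quotient.eq] at hv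
  obtain ⟨w, hw⟩ := hv
  have h0 : a * w 0 + b * w 1 = -(c * v 0) := by
    simpa [Matrix.mulVec, dotProduct] using congrFun hw 0
  have h1 : -(a * w 1) = a - c * v 1 := by
    simpa [Matrix.mulVec, dotProduct] using congrFun hw 1
  rw [Ideal.mem_span_pair]
  -- pair `a • e₁ = c • v + A w` with the row `(a, b)`
  exact ⟨w 0, a * v 0 + b * v 1, by linear_combination a * h0 + b * h1⟩

end SMulDvd

namespace MvPowerSeries

variable {σ R : Type*} {s t : σ}

theorem X_dvd_of_X_dvd_X_pow_mul [Semiring R] (hst : s ≠ t) {j : ℕ} {φ : MvPowerSeries σ R}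
    (h : X s ∣ X t ^ j * φ) : X s ∣ φ := by
  rw [X_dvd_iff] at h ⊢
  intro μ hμ
  have := h (Finsupp.single t j + μ) (by simp [hst, hμ])
  rwa [X_pow_eq, coeff_add_monomial_mul, one_mul] at this

theorem X_mul_X_pow_notMem_span [CommRing R] [Nontrivial R] (hst : s ≠ t) (j : ℕ) :
    X s * X t ^ j ∉ Ideal.span {(X s : MvPowerSeries σ R) ^ 2, X t ^ (j + 1)} := by
  classical
  rw [Ideal.mem_span_pair]
  rintro ⟨p, q, hpq⟩
  let μ : σ →₀ ℕ := Finsupp.single s 1 + Finsupp.single t j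
  have hp : coeff μ (p * X s ^ 2) = 0 :=
    X_pow_dvd_iff.1 (dvd_mul_left _ _) μ (by simp [μ, hst])
  have hq : coeff μ (q * X t ^ (j + 1)) = 0 :=
    X_pow_dvd_iff.1 (dvd_mul_left _ _) μ (by simp [μ, hst.symm])
  have hx : coeff μ (X s * X t ^ j : MvPowerSeries σ R) = 1 := by
    rw [X_pow_eq, X_def, monomial_mul_monomial, one_mul, coeff_monomial_same]
  have := congrArg (coeff μ) hpq
  rw [map_add, hp, hq, hx, add_zero] at this
  exact zero_ne_one this

instance isLocalHom_constantCoeff {k : Type*} [Field k] :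
    IsLocalHom (constantCoeff : MvPowerSeries σ k →+* k) :=
  ⟨fun _ h => isUnit_iff_constantCoeff.2 h⟩

theorem map_constantCoeff_of_mul_eq_mul [CommRing R] (hst : s ≠ t) {j : ℕ} (hj : j ≠ 0)
    {e e' : Matrix (Fin 2) (Fin 2) (MvPowerSeries σ R)}
    (h : e * !![X s, X t ^ j; 0, -X s] = !![X s, X t ^ j; 0, -X s] * e') :
    e.map constantCoeff =
      !![constantCoeff (e 0 0), constantCoeff (e 0 1); 0, constantCoeff (e 0 0)] := by
  have h00 : e 0 0 * X s = X s * e' 0 0 + X t ^ j * e' 1 0 := by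
    simpa [Matrix.mul_apply] using congrFun (congrFun h 0) 0
  have h01 : e 0 0 * X t ^ j - e 0 1 * X s = X s * e' 0 1 + X t ^ j * e' 1 1 := by
    simpa [Matrix.mul_apply, sub_eq_add_neg] using congrFun (congrFun h 0) 1
  have h10 : e 1 0 * X s = -(X s * e' 1 0) := by
    simpa [Matrix.mul_apply] using congrFun (congrFun h 1) 0
  have h11 : e 1 0 * X t ^ j - e 1 1 * X s = -(X s * e' 1 1) := by
    simpa [Matrix.mul_apply, sub_eq_add_neg] using congrFun (congrFun h 1) 1
  have cancel {u v : MvPowerSeries σ R} (huv : X s * u = X s * v) : u = v :=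
    (mul_cancel_left_mem_nonZeroDivisors (X_mem_nonzeroDivisors (R := R) (i := s))).1 huv
  have hc' : e' 1 0 = -e 1 0 := cancel (by linear_combination h10)
  obtain ⟨c, hc⟩ : X s ∣ e 1 0 :=
    X_dvd_of_X_dvd_X_pow_mul hst ⟨e' 0 0 - e 0 0, by linear_combination h00 + X t ^ j * hc'⟩
  have hd' : e' 1 1 = e 1 1 - X t ^ j * c := cancel (by linear_combination h11 - X t ^ j * hc)
  obtain ⟨g, hg⟩ : X s ∣ e 0 0 - e 1 1 + X t ^ j * c :=
    X_dvd_of_X_dvd_X_pow_mul hst ⟨e 0 1 + e' 0 1, by linear_combination h01 + X t ^ j * hd'⟩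
  have hc0 : constantCoeff (e 1 0) = 0 := by simp [hc]
  have had : constantCoeff (e 0 0) = constantCoeff (e 1 1) :=
    sub_eq_zero.1 (by simpa [hj] using congrArg constantCoeff hg)
  ext a b
  fin_cases a <;> fin_cases b <;> simp [hc0, had]

end MvPowerSeries

noncomputable section

namespace DInfinity

abbrev coordRing (k : Type*) [Field k] : Type _ :=
  MvPowerSeries (Fin 2) k ⧸ Ideal.span {(X 0 : MvPowerSeries (Fin 2) k) ^ 2 * X 1}

abbrev quotMk (k : Type*) [Field k] : MvPowerSeries (Fin 2) k →+* coordRing k :=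
  Ideal.Quotient.mk _

abbrev matA (k : Type*) [Field k] (j : ℕ) : Matrix (Fin 2) (Fin 2) (MvPowerSeries (Fin 2) k) :=
  !![X 0, X 1 ^ j; 0, -X 0]

abbrev cokerA (k : Type*) [Field k] (j : ℕ) : Type _ :=
  ((matA k j).map (quotMk k)).coker

abbrev threefoldMF (k : Type*) [Field k] (j : ℕ) :
    Fin 3 → Matrix (Fin 2) (Fin 2) (MvPowerSeries (Fin 2) k) :=
  ![matA k j, !![X 1, 0; 0, X 1], matA k j]

variable {k : Type*} [Field k]

theorem matA_map {R : Type*} [CommRing R] (q : MvPowerSeries (Fin 2) k →+* R) (j : ℕ) :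
    (matA k j).map q = !![q (X 0), q (X 1) ^ j; 0, -q (X 0)] := by
  ext a b
  fin_cases a <;> fin_cases b <;> simp

theorem smulDvd_cokerA {j l : ℕ} (hjl : j < l) :
    SMulDvd (quotMk k (X 0)) (quotMk k (X 1) ^ (j + 1)) (cokerA k l) := by
  unfold cokerA
  rw [matA_map]
  exact (smulDvd_coker_upperTriangular _ _).of_dvd (pow_dvd_pow _ hjl)

theorem not_smulDvd_cokerA (j : ℕ) :
    ¬ SMulDvd (quotMk k (X 0)) (quotMk k (X 1) ^ (j + 1)) (cokerA k j) := by
  intro h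
  unfold cokerA at h
  rw [matA_map] at h
  have hmem := mul_mem_span_of_smulDvd_coker h
  have hspan : Ideal.span {quotMk k (X 0) ^ 2, quotMk k (X 1) ^ (j + 1)} =
      (Ideal.span {X 0 ^ 2, X 1 ^ (j + 1)}).map (quotMk k) := by
    rw [Ideal.map_span, Set.image_pair, map_pow, map_pow]
  have hker : Ideal.span {(X 0 : MvPowerSeries (Fin 2) k) ^ 2 * X 1} ≤
      Ideal.span {X 0 ^ 2, X 1 ^ (j + 1)} :=
    Ideal.span_le.2 (Set.singleton_subset_iff.2
      (Ideal.mul_mem_right _ _ (Ideal.subset_span (Set.mem_insert _ _))))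
  rw [hspan, ← map_pow, ← map_mul, ← Ideal.mem_comap,
    Ideal.comap_map_of_surjective' _ Ideal.Quotient.mk_surjective, Ideal.mk_ker,
    sup_eq_left.2 hker] at hmem
  exact MvPowerSeries.X_mul_X_pow_notMem_span (by decide) j hmem

theorem isEmpty_cokerAEquiv_of_lt {j l : ℕ} (hjl : j < l) :
    IsEmpty (cokerA k j ≃ₗ[coordRing k] cokerA k l) :=
  ⟨fun e => not_smulDvd_cokerA j ((smulDvd_cokerA hjl).of_linearEquiv e.symm)⟩

theorem isEmpty_cokerAEquiv {j l : ℕ} (hjl : j ≠ l) :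
    IsEmpty (cokerA k j ≃ₗ[coordRing k] cokerA k l) := by
  rcases hjl.lt_or_gt with h | h
  · exact isEmpty_cokerAEquiv_of_lt h
  · exact ⟨fun e => (isEmpty_cokerAEquiv_of_lt h).false e.symm⟩

theorem not_mfIso_threefoldMF {j l : ℕ} (hjl : j ≠ l) :
    ¬ MFIso (threefoldMF k j) (threefoldMF k l) := fun h =>
  (isEmpty_cokerAEquiv hjl).false (h.nonempty_cokerEquiv (quotMk k)).some

theorem matA_mul_self (j : ℕ) :
    matA k j * matA k j = (X 0 ^ 2 : MvPowerSeries (Fin 2) k) • 1 :=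
  Matrix.upperTriangular_mul_self _ _

theorem matA_mul_left_cancel {j : ℕ} {M N : Matrix (Fin 2) (Fin 2) (MvPowerSeries (Fin 2) k)}
    (h : matA k j * M = matA k j * N) : M = N := by
  refine Matrix.eq_of_smul_eq_smul_of_mem_nonZeroDivisors
    (pow_mem (MvPowerSeries.X_mem_nonzeroDivisors (R := k) (i := 0)) 2) ?_
  rw [← Matrix.one_mul M, ← Matrix.one_mul N, ← Matrix.smul_mul, ← Matrix.smul_mul,
    ← matA_mul_self j, Matrix.mul_assoc, Matrix.mul_assoc, h]

theorem isMatrixFactorization_threefoldMF (j : ℕ) :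
    IsMatrixFactorization ((X 0 : MvPowerSeries (Fin 2) k) ^ 2 * X 1) (threefoldMF k j) := by
  simp only [IsMatrixFactorization, List.ofFn_succ, List.ofFn_zero, List.prod_cons,
    List.prod_nil, Matrix.mul_one]
  change matA k j * (!![X 1, 0; 0, X 1] * matA k j) = _
  rw [Matrix.diagonal_fin_two_eq_smul_one, Matrix.smul_mul, Matrix.one_mul, Matrix.mul_smul,
    matA_mul_self, smul_smul, mul_comm]

theorem mfReduced_threefoldMF {j : ℕ} (hj : j ≠ 0) : MFReduced (threefoldMF k j) := by
  have hA (r c : Fin 2) : ¬ IsUnit (matA k j r c) := by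
    rw [MvPowerSeries.isUnit_iff_constantCoeff]
    fin_cases r <;> fin_cases c <;> simp [hj]
  have hD (r c : Fin 2) : ¬ IsUnit (!![X 1, 0; 0, X 1] r c : MvPowerSeries (Fin 2) k) := by
    rw [MvPowerSeries.isUnit_iff_constantCoeff]
    fin_cases r <;> fin_cases c <;> simp
  intro i
  fin_cases i
  exacts [hA, hD, hA]

theorem eq_zero_or_eq_one_of_mul_matA_eq {j : ℕ} (hj : j ≠ 0)
    {e e' : Matrix (Fin 2) (Fin 2) (MvPowerSeries (Fin 2) k)} (he : IsIdempotentElem e)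
    (h : e * matA k j = matA k j * e') : e = 0 ∨ e = 1 := by
  have hmap := MvPowerSeries.map_constantCoeff_of_mul_eq_mul (by decide) hj h
  have hidem : IsIdempotentElem (e.map constantCoeff) := he.map constantCoeff.mapMatrix
  rw [hmap] at hidem
  rcases Matrix.eq_zero_or_eq_one_of_isIdempotentElem_upperTriangular hidem with h0 | h1
  · exact .inl <|
      Matrix.eq_zero_of_isIdempotentElem_of_map_eq_zero constantCoeff he (hmap.trans h0)
  · exact .inr <|
      Matrix.eq_one_of_isIdempotentElem_of_map_eq_one constantCoeff he (hmap.trans h1)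

theorem mfIndecomposable_threefoldMF {j : ℕ} (hj : j ≠ 0) :
    MFIndecomposable ((X 0 : MvPowerSeries (Fin 2) k) ^ 2 * X 1) (threefoldMF k j) := by
  refine ⟨isMatrixFactorization_threefoldMF j, fun e hcomm hidem => ?_⟩
  have h12 : e 1 = e 2 := by
    refine Matrix.eq_of_smul_eq_smul_of_mem_nonZeroDivisors
      (MvPowerSeries.X_mem_nonzeroDivisors (R := k) (i := 1)) ?_
    simpa [Matrix.diagonal_fin_two_eq_smul_one] using hcomm 1
  have h01 : e 0 * matA k j = matA k j * e 1 := hcomm 0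
  rcases eq_zero_or_eq_one_of_mul_matA_eq hj (hidem 0) h01 with he0 | he0
  · have he1 : e 1 = 0 := matA_mul_left_cancel (by rw [← h01, he0, zero_mul, mul_zero])
    left
    ext1 i
    fin_cases i
    exacts [he0, he1, h12 ▸ he1]
  · have he1 : e 1 = 1 := matA_mul_left_cancel (by rw [← h01, he0, one_mul, mul_one])
    right
    ext1 i
    fin_cases i
    exacts [he0, he1, h12 ▸ he1]

theorem not_finiteReducedMFType :
    ¬ FiniteReducedMFType ((X 0 : MvPowerSeries (Fin 2) k) ^ 2 * X 1) 3 := by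
  rintro ⟨N, sz, Y, hY⟩
  choose i hi using fun j : ℕ => hY 2 (threefoldMF k (j + 1))
    (mfIndecomposable_threefoldMF j.succ_ne_zero) (mfReduced_threefoldMF j.succ_ne_zero)
  obtain ⟨j, l, hjl, hij⟩ := Finite.exists_ne_map_eq_of_infinite i
  obtain ⟨ej⟩ := (hi j).nonempty_cokerEquiv (quotMk k)
  obtain ⟨el⟩ := (hij ▸ hi l).nonempty_cokerEquiv (quotMk k)
  exact (isEmpty_cokerAEquiv (k := k) (by omega : j + 1 ≠ l + 1)).false (ej.trans el.symm)

end DInfinity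

end

theorem x2y_infinite_reduced_threefold_type_general {k : Type*} [Field k] :
    (∀ j l : ℕ, 1 ≤ j → 1 ≤ l → j ≠ l →
      IsEmpty
        (((Fin 2 → MvPowerSeries (Fin 2) k ⧸
            Ideal.span {(X 0 : MvPowerSeries (Fin 2) k) ^ 2 * X 1}) ⧸
          LinearMap.range (Matrix.toLin'
            ((!![(X 0 : MvPowerSeries (Fin 2) k), (X 1) ^ j; 0, -(X 0)]).map
              (Ideal.Quotient.mk
                (Ideal.span {(X 0 : MvPowerSeries (Fin 2) k) ^ 2 * X 1}))))) ≃ₗ[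
          MvPowerSeries (Fin 2) k ⧸
            Ideal.span {(X 0 : MvPowerSeries (Fin 2) k) ^ 2 * X 1}]
         ((Fin 2 → MvPowerSeries (Fin 2) k ⧸
            Ideal.span {(X 0 : MvPowerSeries (Fin 2) k) ^ 2 * X 1}) ⧸
          LinearMap.range (Matrix.toLin'
            ((!![(X 0 : MvPowerSeries (Fin 2) k), (X 1) ^ l; 0, -(X 0)]).map
              (Ideal.Quotient.mk
                (Ideal.span {(X 0 : MvPowerSeries (Fin 2) k) ^ 2 * X 1}))))))) ∧
    (∀ j l : ℕ, 1 ≤ j → 1 ≤ l → j ≠ l →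
      ¬ MFIso
        (![!![(X 0 : MvPowerSeries (Fin 2) k), (X 1) ^ j; 0, -(X 0)],
           !![(X 1 : MvPowerSeries (Fin 2) k), 0; 0, X 1],
           !![(X 0 : MvPowerSeries (Fin 2) k), (X 1) ^ j; 0, -(X 0)]])
        (![!![(X 0 : MvPowerSeries (Fin 2) k), (X 1) ^ l; 0, -(X 0)],
           !![(X 1 : MvPowerSeries (Fin 2) k), 0; 0, X 1],
           !![(X 0 : MvPowerSeries (Fin 2) k), (X 1) ^ l; 0, -(X 0)]])) ∧
    ¬ FiniteReducedMFType ((X 0 : MvPowerSeries (Fin 2) k) ^ 2 * X 1) 3 :=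
  ⟨fun _ _ _ _ hjl => DInfinity.isEmpty_cokerAEquiv hjl,
    fun _ _ _ _ hjl => DInfinity.not_mfIso_threefoldMF hjl,
    DInfinity.not_finiteReducedMFType⟩

set_option synthInstance.maxHeartbeats 1000000 in
set_option maxHeartbeats 1000000 in
theorem x2y_infinite_reduced_threefold_type {k : Type*} [Field k]
    (hchar : (2 : k) ≠ 0) :
    (∀ j l : ℕ, 1 ≤ j → 1 ≤ l → j ≠ l →
      IsEmpty
        (((Fin 2 → MvPowerSeries (Fin 2) k ⧸
            Ideal.span {(X 0 : MvPowerSeries (Fin 2) k) ^ 2 * X 1}) ⧸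
          LinearMap.range (Matrix.toLin'
            ((!![(X 0 : MvPowerSeries (Fin 2) k), (X 1) ^ j; 0, -(X 0)]).map
              (Ideal.Quotient.mk
                (Ideal.span {(X 0 : MvPowerSeries (Fin 2) k) ^ 2 * X 1}))))) ≃ₗ[
          MvPowerSeries (Fin 2) k ⧸
            Ideal.span {(X 0 : MvPowerSeries (Fin 2) k) ^ 2 * X 1}]
         ((Fin 2 → MvPowerSeries (Fin 2) k ⧸
            Ideal.span {(X 0 : MvPowerSeries (Fin 2) k) ^ 2 * X 1}) ⧸
          LinearMap.range (Matrix.toLin'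
            ((!![(X 0 : MvPowerSeries (Fin 2) k), (X 1) ^ l; 0, -(X 0)]).map
              (Ideal.Quotient.mk
                (Ideal.span {(X 0 : MvPowerSeries (Fin 2) k) ^ 2 * X 1}))))))) ∧
    (∀ j l : ℕ, 1 ≤ j → 1 ≤ l → j ≠ l →
      ¬ MFIso
        (![!![(X 0 : MvPowerSeries (Fin 2) k), (X 1) ^ j; 0, -(X 0)],
           !![(X 1 : MvPowerSeries (Fin 2) k), 0; 0, X 1],
           !![(X 0 : MvPowerSeries (Fin 2) k), (X 1) ^ j; 0, -(X 0)]])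
        (![!![(X 0 : MvPowerSeries (Fin 2) k), (X 1) ^ l; 0, -(X 0)],
           !![(X 1 : MvPowerSeries (Fin 2) k), 0; 0, X 1],
           !![(X 0 : MvPowerSeries (Fin 2) k), (X 1) ^ l; 0, -(X 0)]])) ∧
    ¬ FiniteReducedMFType ((X 0 : MvPowerSeries (Fin 2) k) ^ 2 * X 1) 3 :=
  x2y_infinite_reduced_threefold_type_general
end
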